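/- Let n ≥ 3 and let V be a conformal Killing 2-tensor on ℝⁿ. Define the second-order operators D_V f = Σ_{a,b} V^{ab} ∂_a ∂_b f + (n/(n+2)) Σ_{a,b} (∂_a V^{ab}) ∂_b f + (n(n−2)/(4(n+2)(n+1))) (Σ_{a,b} ∂_a ∂_b V^{ab}) f and δ_V f = Σ_{a,b} V^{ab} ∂_a ∂_b f + ((n+4)/(n+2)) Σ_{a,b} (∂_a V^{ab}) ∂_b f + ((n+4)/(4(n+1))) (Σ_{a,b} ∂_a ∂_b V^{ab}) f. Then for every smooth function f : ℝⁿ → ℝ one has Δ(D_V f) = δ_V(Δ f) as functions on ℝⁿ. -/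

import Mathlib

/-- Partial derivative in the `a`-th coordinate direction. -/
noncomputable def pd {n : ℕ} (a : Fin n) (f : (Fin n → ℝ) → ℝ) : (Fin n → ℝ) → ℝ :=
  fun x => fderiv ℝ f x (Pi.single a (1 : ℝ))

/-- The Laplacian `Δf = Σ_a ∂_a ∂_a f`. -/
noncomputable def lap {n : ℕ} (f : (Fin n → ℝ) → ℝ) : (Fin n → ℝ) → ℝ :=
  fun x => ∑ a, pd a (pd a f) x

/-- A conformal Killing 2-tensor on ℝⁿ: a smooth symmetric trace-free 2-tensor field
with `∂_a V^{bc} + ∂_b V^{ca} + ∂_c V^{ab} = (2/(n+2))(δ_{ab} w^c + δ_{bc} w^a + δ_{ca} w^b)`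
where `w^c = Σ_e ∂_e V^{ce}`. -/
def IsCKT2 (n : ℕ) (V : (Fin n → ℝ) → Fin n → Fin n → ℝ) : Prop :=
  (∀ a b, ContDiff ℝ (⊤ : ℕ∞) fun x => V x a b) ∧
  (∀ x a b, V x a b = V x b a) ∧
  (∀ x, ∑ a, V x a a = 0) ∧
  (∀ (a b c : Fin n) (x : Fin n → ℝ),
    pd a (fun y => V y b c) x + pd b (fun y => V y c a) x + pd c (fun y => V y a b) x
      = 2 / ((n : ℝ) + 2) *
        ((if a = b then (1 : ℝ) else 0) * (∑ e, pd e (fun y => V y c e) x)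
          + (if b = c then (1 : ℝ) else 0) * (∑ e, pd e (fun y => V y a e) x)
          + (if c = a then (1 : ℝ) else 0) * (∑ e, pd e (fun y => V y b e) x)))

/-- `D_V f = Σ V^{ab}∂_a∂_b f + (n/(n+2)) Σ (∂_a V^{ab}) ∂_b f
  + (n(n−2)/(4(n+2)(n+1))) (Σ ∂_a∂_b V^{ab}) f`. -/
noncomputable def opD2 {n : ℕ} (V : (Fin n → ℝ) → Fin n → Fin n → ℝ)
    (f : (Fin n → ℝ) → ℝ) : (Fin n → ℝ) → ℝ :=
  fun x => (∑ a, ∑ b, V x a b * pd a (pd b f) x)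
    + (n : ℝ) / ((n : ℝ) + 2) * ∑ b, (∑ a, pd a (fun y => V y a b) x) * pd b f x
    + (n : ℝ) * ((n : ℝ) - 2) / (4 * ((n : ℝ) + 2) * ((n : ℝ) + 1))
        * (∑ a, ∑ b, pd a (pd b fun y => V y a b) x) * f x

/-- `δ_V f = Σ V^{ab}∂_a∂_b f + ((n+4)/(n+2)) Σ (∂_a V^{ab}) ∂_b f
  + ((n+4)/(4(n+1))) (Σ ∂_a∂_b V^{ab}) f`. -/
noncomputable def opDelta2 {n : ℕ} (V : (Fin n → ℝ) → Fin n → Fin n → ℝ)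
    (f : (Fin n → ℝ) → ℝ) : (Fin n → ℝ) → ℝ :=
  fun x => (∑ a, ∑ b, V x a b * pd a (pd b f) x)
    + ((n : ℝ) + 4) / ((n : ℝ) + 2) * ∑ b, (∑ a, pd a (fun y => V y a b) x) * pd b f x
    + ((n : ℝ) + 4) / (4 * ((n : ℝ) + 1))
        * (∑ a, ∑ b, pd a (pd b fun y => V y a b) x) * f x

namespace CKTtool

variable {n : ℕ}

/-- smooth = C^∞ (ℕ∞ top) -/
abbrev Sm (f : (Fin n → ℝ) → ℝ) : Prop := ContDiff ℝ ((⊤ : ℕ∞) : WithTop ℕ∞) f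

lemma contDiff_pd {f : (Fin n → ℝ) → ℝ} (hf : Sm f) (a : Fin n) :
    Sm (pd a f) := by
  have h := (contDiff_infty_iff_fderiv.mp hf).2
  exact h.clm_apply contDiff_const

lemma sm_diff {f : (Fin n → ℝ) → ℝ} (hf : Sm f) : Differentiable ℝ f :=
  hf.differentiable (by simp)

lemma pd_add {f g : (Fin n → ℝ) → ℝ} (hf : Differentiable ℝ f) (hg : Differentiable ℝ g)
    (a : Fin n) : pd a (fun x => f x + g x) = fun x => pd a f x + pd a g x := by
  funext x
  simp only [pd, fderiv_fun_add (hf x) (hg x)]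
  rfl

lemma pd_mul {f g : (Fin n → ℝ) → ℝ} (hf : Differentiable ℝ f) (hg : Differentiable ℝ g)
    (a : Fin n) : pd a (fun x => f x * g x)
      = fun x => pd a f x * g x + f x * pd a g x := by
  funext x
  simp only [pd, fderiv_fun_mul (hf x) (hg x)]
  simp [mul_comm]
  ring

lemma pd_const_mul {f : (Fin n → ℝ) → ℝ} (hf : Differentiable ℝ f) (c : ℝ)
    (a : Fin n) : pd a (fun x => c * f x) = fun x => c * pd a f x := by
  funext x
  simp only [pd, fderiv_const_mul (hf x) c]
  rfl

lemma pd_sum {ι : Type*} (s : Finset ι) {F : ι → (Fin n → ℝ) → ℝ}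
    (hF : ∀ i ∈ s, Differentiable ℝ (F i)) (a : Fin n) :
    pd a (fun x => ∑ i ∈ s, F i x) = fun x => ∑ i ∈ s, pd a (F i) x := by
  funext x
  simp only [pd, fderiv_fun_sum (fun i hi => (hF i hi) x)]
  simp

lemma pd_comm {f : (Fin n → ℝ) → ℝ} (hf : Sm f) (a b : Fin n) :
    pd a (pd b f) = pd b (pd a f) := by
  funext x
  have hdf : Differentiable ℝ (fderiv ℝ f) :=
    ((contDiff_infty_iff_fderiv.mp hf).2).differentiable (by simp)
  have hsym : ∀ v w, fderiv ℝ (fderiv ℝ f) x v w = fderiv ℝ (fderiv ℝ f) x w v :=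
    fun v w => second_derivative_symmetric
      (fun y => (sm_diff hf y).hasFDerivAt) (hdf x).hasFDerivAt v w
  have key : ∀ (c : Fin n) (v : Fin n → ℝ), pd c (fun y => fderiv ℝ f y v) x
      = fderiv ℝ (fderiv ℝ f) x (Pi.single c 1) v := by
    intro c v
    show fderiv ℝ (fun y => (fderiv ℝ f y) v) x (Pi.single c 1) = _
    rw [fderiv_clm_apply (hdf x) (differentiableAt_const v)]
    simp
  show pd a (pd b f) x = pd b (pd a f) x
  have h1 : pd a (pd b f) x = fderiv ℝ (fderiv ℝ f) x (Pi.single a 1) (Pi.single b 1) :=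
    key a (Pi.single b 1)
  have h2 : pd b (pd a f) x = fderiv ℝ (fderiv ℝ f) x (Pi.single b 1) (Pi.single a 1) :=
    key b (Pi.single a 1)
  rw [h1, h2, hsym]


lemma sm_mul {f g : (Fin n → ℝ) → ℝ} (hf : Sm f) (hg : Sm g) :
    Sm (fun x => f x * g x) := hf.mul hg

lemma sm_sum {ι : Type*} (s : Finset ι) {F : ι → (Fin n → ℝ) → ℝ}
    (hF : ∀ i ∈ s, Sm (F i)) : Sm (fun x => ∑ i ∈ s, F i x) :=
  ContDiff.sum hF

lemma contDiff_lap {f : (Fin n → ℝ) → ℝ} (hf : Sm f) : Sm (lap f) :=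
  sm_sum _ fun a _ => contDiff_pd (contDiff_pd hf a) a

lemma pd_lap {f : (Fin n → ℝ) → ℝ} (hf : Sm f) (a : Fin n) :
    pd a (lap f) = lap (pd a f) := by
  have h1 : lap f = fun x => ∑ e, pd e (pd e f) x := rfl
  rw [h1, pd_sum Finset.univ (fun e _ => sm_diff (contDiff_pd (contDiff_pd hf e) e)) a]
  funext x
  show ∑ e, pd a (pd e (pd e f)) x = ∑ e, pd e (pd e (pd a f)) x
  refine Finset.sum_congr rfl fun e _ => ?_
  rw [pd_comm (contDiff_pd hf e) a e, pd_comm hf a e]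

lemma lap_mul {f g : (Fin n → ℝ) → ℝ} (hf : Sm f) (hg : Sm g) (x : Fin n → ℝ) :
    lap (fun y => f y * g y) x
      = lap f x * g x + 2 * (∑ e, pd e f x * pd e g x) + f x * lap g x := by
  have key : ∀ e, pd e (pd e (fun y => f y * g y)) x
      = pd e (pd e f) x * g x + 2 * (pd e f x * pd e g x) + f x * pd e (pd e g) x := by
    intro e
    rw [pd_mul (sm_diff hf) (sm_diff hg) e]
    rw [pd_add (sm_diff (sm_mul (contDiff_pd hf e) hg)) (sm_diff (sm_mul hf (contDiff_pd hg e))) e]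
    rw [pd_mul (sm_diff (contDiff_pd hf e)) (sm_diff hg) e,
        pd_mul (sm_diff hf) (sm_diff (contDiff_pd hg e)) e]
    ring
  show ∑ e, pd e (pd e (fun y => f y * g y)) x = _
  rw [Finset.sum_congr rfl fun e _ => key e]
  simp only [Finset.sum_add_distrib, ← Finset.sum_mul, ← Finset.mul_sum]
  rfl

lemma lap_add {f g : (Fin n → ℝ) → ℝ} (hf : Sm f) (hg : Sm g) (x : Fin n → ℝ) :
    lap (fun y => f y + g y) x = lap f x + lap g x := by
  have key : ∀ e, pd e (pd e (fun y => f y + g y)) x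
      = pd e (pd e f) x + pd e (pd e g) x := by
    intro e
    rw [pd_add (sm_diff hf) (sm_diff hg) e,
        pd_add (sm_diff (contDiff_pd hf e)) (sm_diff (contDiff_pd hg e)) e]
  show ∑ e, pd e (pd e fun y => f y + g y) x = _
  rw [Finset.sum_congr rfl fun e _ => key e, Finset.sum_add_distrib]
  rfl

lemma lap_const_mul {f : (Fin n → ℝ) → ℝ} (hf : Sm f) (c : ℝ) (x : Fin n → ℝ) :
    lap (fun y => c * f y) x = c * lap f x := by
  have key : ∀ e, pd e (pd e (fun y => c * f y)) x = c * pd e (pd e f) x := by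
    intro e
    rw [pd_const_mul (sm_diff hf) c e, pd_const_mul (sm_diff (contDiff_pd hf e)) c e]
  show ∑ e, pd e (pd e fun y => c * f y) x = _
  rw [Finset.sum_congr rfl fun e _ => key e, ← Finset.mul_sum]
  rfl

lemma lap_sum {ι : Type*} (s : Finset ι) {F : ι → (Fin n → ℝ) → ℝ}
    (hF : ∀ i ∈ s, Sm (F i)) (x : Fin n → ℝ) :
    lap (fun y => ∑ i ∈ s, F i y) x = ∑ i ∈ s, lap (F i) x := by
  have key : ∀ e, pd e (pd e (fun y => ∑ i ∈ s, F i y)) x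
      = ∑ i ∈ s, pd e (pd e (F i)) x := by
    intro e
    rw [pd_sum s (fun i hi => sm_diff (hF i hi)) e,
        pd_sum s (fun i hi => sm_diff (contDiff_pd (hF i hi) e)) e]
  show ∑ e, pd e (pd e fun y => ∑ i ∈ s, F i y) x = _
  rw [Finset.sum_congr rfl fun e _ => key e, Finset.sum_comm]
  rfl


variable {n : ℕ} (V : (Fin n → ℝ) → Fin n → Fin n → ℝ)

/-- w^b = Σ_a ∂_a V^{ab} -/
noncomputable def Wt (b : Fin n) : (Fin n → ℝ) → ℝ := fun y => ∑ a, pd a (fun z => V z a b) y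

/-- Φ = Σ_{a,b} ∂_a ∂_b V^{ab} -/
noncomputable def Phi : (Fin n → ℝ) → ℝ := fun y => ∑ a, ∑ b, pd a (pd b fun z => V z a b) y

variable {V}

section
variable (hV : IsCKT2 n V)
include hV

lemma smV (a b : Fin n) : Sm (fun x => V x a b) := (hV.1 a b).of_le (by simp)

lemma smW (b : Fin n) : Sm (Wt V b) :=
  sm_sum _ fun a _ => contDiff_pd (smV hV a b) a

lemma smPhi : Sm (Phi V) :=
  sm_sum _ fun a _ => sm_sum _ fun b _ => contDiff_pd (contDiff_pd (smV hV a b) b) a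

lemma wconv (c : Fin n) : (fun y => ∑ e, pd e (fun z => V z c e) y) = Wt V c := by
  funext y
  refine Finset.sum_congr rfl fun e _ => ?_
  congr 1
  funext z
  exact hV.2.1 z c e

lemma phiW : (fun y => ∑ b, pd b (Wt V b) y) = Phi V := by
  funext y
  show ∑ b, pd b (Wt V b) y = ∑ a, ∑ b, pd a (pd b fun z => V z a b) y
  have h1 : ∀ b : Fin n, pd b (Wt V b) y = ∑ a, pd b (pd a fun z => V z a b) y := by
    intro b
    show pd b (fun z => ∑ a, pd a (fun w => V w a b) z) y = _
    rw [pd_sum Finset.univ (fun a _ => sm_diff (contDiff_pd (smV hV a b) a)) b]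
  rw [Finset.sum_congr rfl fun b _ => h1 b, Finset.sum_comm]
  refine Finset.sum_congr rfl fun a _ => Finset.sum_congr rfl fun b _ => ?_
  rw [pd_comm (smV hV a b) b a]

lemma ckt_fun (a b c : Fin n) :
    (fun x => pd a (fun y => V y b c) x + pd b (fun y => V y c a) x
        + pd c (fun y => V y a b) x)
      = fun x => 2 / ((n : ℝ) + 2) *
          ((if a = b then (1 : ℝ) else 0) * Wt V c x
            + (if b = c then (1 : ℝ) else 0) * Wt V a x
            + (if c = a then (1 : ℝ) else 0) * Wt V b x) := by
  funext x
  rw [hV.2.2.2 a b c x, congrFun (wconv hV c) x, congrFun (wconv hV a) x,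
    congrFun (wconv hV b) x]

/-- ΔV^{bc} = −(n/(n+2))(∂_b w^c + ∂_c w^b) + (2/(n+2)) δ_{bc} Φ -/
lemma lapV (b c : Fin n) (x : Fin n → ℝ) :
    lap (fun y => V y b c) x
      = -((n : ℝ) / ((n : ℝ) + 2)) * (pd b (Wt V c) x + pd c (Wt V b) x)
        + 2 / ((n : ℝ) + 2) * (if b = c then (1 : ℝ) else 0) * Phi V x := by
  -- differentiate the CKT identity in direction a at x and sum over a
  have key : ∀ a : Fin n,
      pd a (pd a (fun y => V y b c)) x + pd a (pd b (fun y => V y c a)) x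
        + pd a (pd c (fun y => V y a b)) x
      = 2 / ((n : ℝ) + 2) *
          ((if a = b then (1 : ℝ) else 0) * pd a (Wt V c) x
            + (if b = c then (1 : ℝ) else 0) * pd a (Wt V a) x
            + (if c = a then (1 : ℝ) else 0) * pd a (Wt V b) x) := by
    intro a
    have h := congrArg (pd a) (ckt_fun hV a b c)
    have hL : pd a (fun x => pd a (fun y => V y b c) x + pd b (fun y => V y c a) x
        + pd c (fun y => V y a b) x) x
        = pd a (pd a (fun y => V y b c)) x + pd a (pd b (fun y => V y c a)) x
          + pd a (pd c (fun y => V y a b)) x := by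
      have d1 : Differentiable ℝ (fun x => pd a (fun y => V y b c) x
          + pd b (fun y => V y c a) x) :=
        (sm_diff (contDiff_pd (smV hV b c) a)).add (sm_diff (contDiff_pd (smV hV c a) b))
      rw [pd_add d1 (sm_diff (contDiff_pd (smV hV a b) c)) a]
      rw [pd_add (sm_diff (contDiff_pd (smV hV b c) a))
        (sm_diff (contDiff_pd (smV hV c a) b)) a]
    have hR : pd a (fun x => 2 / ((n : ℝ) + 2) *
          ((if a = b then (1 : ℝ) else 0) * Wt V c x
            + (if b = c then (1 : ℝ) else 0) * Wt V a x
            + (if c = a then (1 : ℝ) else 0) * Wt V b x)) x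
        = 2 / ((n : ℝ) + 2) *
          ((if a = b then (1 : ℝ) else 0) * pd a (Wt V c) x
            + (if b = c then (1 : ℝ) else 0) * pd a (Wt V a) x
            + (if c = a then (1 : ℝ) else 0) * pd a (Wt V b) x) := by
      have dWc := sm_diff (smW hV c); have dWa := sm_diff (smW hV a)
      have dWb := sm_diff (smW hV b)
      rw [pd_const_mul (((dWc.const_mul _).fun_add (dWa.const_mul _)).fun_add (dWb.const_mul _)) _ a]
      show 2 / ((n : ℝ) + 2) * pd a (fun x => ((if a = b then (1:ℝ) else 0) * Wt V c x
        + (if b = c then (1:ℝ) else 0) * Wt V a x) + (if c = a then (1:ℝ) else 0) * Wt V b x) x = _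
      rw [pd_add ((dWc.const_mul _).fun_add (dWa.const_mul _)) (dWb.const_mul _) a,
        pd_add (dWc.const_mul _) (dWa.const_mul _) a,
        pd_const_mul dWc _ a, pd_const_mul dWa _ a, pd_const_mul dWb _ a]
    calc pd a (pd a (fun y => V y b c)) x + pd a (pd b (fun y => V y c a)) x
        + pd a (pd c (fun y => V y a b)) x
        = pd a (fun x => pd a (fun y => V y b c) x + pd b (fun y => V y c a) x
            + pd c (fun y => V y a b) x) x := hL.symm
      _ = _ := by rw [h, hR]
  have hsum := Finset.sum_congr rfl fun a (_ : a ∈ Finset.univ) => key a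
  -- LHS of hsum
  have sL2 : ∑ a : Fin n, pd a (pd b (fun y => V y c a)) x = pd b (Wt V c) x := by
    have h1 : ∀ a : Fin n, pd a (pd b (fun y => V y c a)) x
        = pd b (pd a (fun y => V y a c)) x := by
      intro a
      have he : (fun y => V y c a) = fun y => V y a c := by
        funext y; exact hV.2.1 y c a
      rw [he, pd_comm (smV hV a c) a b]
    rw [Finset.sum_congr rfl fun a _ => h1 a]
    have h2 : pd b (Wt V c) = fun x => ∑ a, pd b (pd a fun z => V z a c) x := by
      show pd b (fun z => ∑ a, pd a (fun w => V w a c) z) = _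
      rw [pd_sum Finset.univ (fun a _ => sm_diff (contDiff_pd (smV hV a c) a)) b]
    rw [h2]
  have sL3 : ∑ a : Fin n, pd a (pd c (fun y => V y a b)) x = pd c (Wt V b) x := by
    have h1 : ∀ a : Fin n, pd a (pd c (fun y => V y a b)) x
        = pd c (pd a (fun y => V y a b)) x := fun a => by
      rw [pd_comm (smV hV a b) a c]
    rw [Finset.sum_congr rfl fun a _ => h1 a]
    have h2 : pd c (Wt V b) = fun x => ∑ a, pd c (pd a fun z => V z a b) x := by
      show pd c (fun z => ∑ a, pd a (fun w => V w a b) z) = _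
      rw [pd_sum Finset.univ (fun a _ => sm_diff (contDiff_pd (smV hV a b) a)) c]
    rw [h2]
  have sPhi : ∑ a : Fin n, pd a (Wt V a) x = Phi V x := congrFun (phiW hV) x
  -- assemble
  have main : lap (fun y => V y b c) x + pd b (Wt V c) x + pd c (Wt V b) x
      = 2 / ((n : ℝ) + 2) *
          (pd b (Wt V c) x + (if b = c then (1 : ℝ) else 0) * Phi V x + pd c (Wt V b) x) := by
    have e1 : ∑ a : Fin n, (pd a (pd a (fun y => V y b c)) x
        + pd a (pd b (fun y => V y c a)) x + pd a (pd c (fun y => V y a b)) x)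
        = lap (fun y => V y b c) x + pd b (Wt V c) x + pd c (Wt V b) x := by
      rw [Finset.sum_add_distrib, Finset.sum_add_distrib, sL2, sL3]
      rfl
    have e2 : ∑ a : Fin n, (2 / ((n : ℝ) + 2) *
          ((if a = b then (1 : ℝ) else 0) * pd a (Wt V c) x
            + (if b = c then (1 : ℝ) else 0) * pd a (Wt V a) x
            + (if c = a then (1 : ℝ) else 0) * pd a (Wt V b) x))
        = 2 / ((n : ℝ) + 2) *
          (pd b (Wt V c) x + (if b = c then (1 : ℝ) else 0) * Phi V x + pd c (Wt V b) x) := by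
      rw [← Finset.mul_sum]
      congr 1
      rw [Finset.sum_add_distrib, Finset.sum_add_distrib]
      congr 1
      · congr 1
        · simp [ite_mul]
        · rw [← Finset.mul_sum, sPhi]
      · simp [ite_mul, eq_comm]
    rw [← e1, ← e2, hsum]
  have hne : (n:ℝ) + 2 ≠ 0 := by positivity
  rcases eq_or_ne b c with hbc | hbc
  · subst hbc
    simp only [if_pos rfl] at main ⊢
    field_simp at main ⊢
    linear_combination main
  · simp only [if_neg hbc] at main ⊢
    field_simp at main ⊢
    linear_combination main
/-- Δw^b = ((2−n)/(2(n+1))) ∂_b Φ -/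
lemma lapW (b : Fin n) (x : Fin n → ℝ) :
    lap (Wt V b) x = (2 - (n : ℝ)) / (2 * ((n : ℝ) + 1)) * pd b (Phi V) x := by
  have hfun : ∀ c : Fin n, lap (fun y => V y b c)
      = fun x => -((n : ℝ) / ((n : ℝ) + 2)) * (pd b (Wt V c) x + pd c (Wt V b) x)
        + 2 / ((n : ℝ) + 2) * (if b = c then (1 : ℝ) else 0) * Phi V x :=
    fun c => funext (lapV hV b c)
  -- LHS as sum of pd c lap V^{bc}
  have hL : lap (Wt V b) x = ∑ c, pd c (lap (fun y => V y b c)) x := by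
    rw [← wconv hV b, lap_sum Finset.univ (fun e _ => contDiff_pd (smV hV b e) e) x]
    refine Finset.sum_congr rfl fun e _ => ?_
    rw [pd_lap (smV hV b e) e]
  -- expand the RHS derivative
  have hR : ∀ c : Fin n, pd c (lap (fun y => V y b c)) x
      = -((n : ℝ) / ((n : ℝ) + 2)) * (pd c (pd b (Wt V c)) x + pd c (pd c (Wt V b)) x)
        + 2 / ((n : ℝ) + 2) * (if b = c then (1 : ℝ) else 0) * pd c (Phi V) x := by
    intro c
    rw [hfun c]
    have dbc := sm_diff (contDiff_pd (smW hV c) b)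
    have dcb := sm_diff (contDiff_pd (smW hV b) c)
    have dPhi := sm_diff (smPhi hV)
    rw [pd_add ((dbc.fun_add dcb).const_mul _) (dPhi.const_mul _) c,
        pd_const_mul (dbc.fun_add dcb) _ c, pd_add dbc dcb c, pd_const_mul dPhi _ c]
  have hbPhi : ∑ c : Fin n, pd c (pd b (Wt V c)) x = pd b (Phi V) x := by
    have h1 : ∀ c : Fin n, pd c (pd b (Wt V c)) x = pd b (pd c (Wt V c)) x :=
      fun c => by rw [pd_comm (smW hV c) c b]
    rw [Finset.sum_congr rfl fun c _ => h1 c]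
    have h2 : pd b (Phi V) = fun x => ∑ c, pd b (pd c (Wt V c)) x := by
      rw [← phiW hV, pd_sum Finset.univ (fun c _ => sm_diff (contDiff_pd (smW hV c) c)) b]
    rw [h2]
  have main : lap (Wt V b) x
      = -((n : ℝ) / ((n : ℝ) + 2)) * (pd b (Phi V) x + lap (Wt V b) x)
        + 2 / ((n : ℝ) + 2) * pd b (Phi V) x := by
    have hlap : ∑ c : Fin n, pd c (pd c (Wt V b)) x = lap (Wt V b) x := rfl
    have hsum2 : ∑ c : Fin n, (2 / ((n : ℝ) + 2) * if b = c then (1:ℝ) else 0) * pd c (Phi V) x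
        = 2 / ((n : ℝ) + 2) * pd b (Phi V) x := by
      have : ∀ c : Fin n, (2 / ((n : ℝ) + 2) * if b = c then (1:ℝ) else 0) * pd c (Phi V) x
          = if b = c then 2 / ((n : ℝ) + 2) * pd c (Phi V) x else 0 := by
        intro c
        rcases eq_or_ne b c with h | h <;> simp [h]
      rw [Finset.sum_congr rfl fun c _ => this c]
      simp [Finset.sum_ite_eq]
    calc lap (Wt V b) x = ∑ c, pd c (lap fun y => V y b c) x := hL
      _ = ∑ c : Fin n, (-((n : ℝ) / ((n : ℝ) + 2)) * (pd c (pd b (Wt V c)) x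
            + pd c (pd c (Wt V b)) x)
            + (2 / ((n : ℝ) + 2) * if b = c then (1:ℝ) else 0) * pd c (Phi V) x) :=
          Finset.sum_congr rfl fun c _ => hR c
      _ = _ := by
          rw [Finset.sum_add_distrib, ← Finset.mul_sum, Finset.sum_add_distrib, hbPhi,
            hlap, hsum2]
  have hne : (n:ℝ) + 2 ≠ 0 := by positivity
  field_simp at main
  have hfac : ((n:ℝ)+2) * (lap (Wt V b) x * (2*(n:ℝ)+2) - (2-(n:ℝ)) * pd b (Phi V) x) = 0 := by
    linear_combination ((n:ℝ)+2) * main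
  have h5 := (mul_eq_zero.mp hfac).resolve_left hne
  rw [div_mul_eq_mul_div, eq_div_iff (by positivity : 2*((n:ℝ)+1) ≠ 0)]
  linear_combination h5

/-- ΔΦ = 0 -/
lemma lapPhi (hn : 0 < n) (x : Fin n → ℝ) : lap (Phi V) x = 0 := by
  have hfun : ∀ b : Fin n, lap (Wt V b)
      = fun x => (2 - (n : ℝ)) / (2 * ((n : ℝ) + 1)) * pd b (Phi V) x :=
    fun b => funext (lapW hV b)
  have main : lap (Phi V) x
      = (2 - (n : ℝ)) / (2 * ((n : ℝ) + 1)) * lap (Phi V) x := by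
    have h1 : lap (Phi V) x = ∑ b, pd b (lap (Wt V b)) x := by
      rw [← phiW hV, lap_sum Finset.univ (fun b _ => contDiff_pd (smW hV b) b) x]
      refine Finset.sum_congr rfl fun b _ => ?_
      rw [pd_lap (smW hV b) b]
    have h2 : ∀ b : Fin n, pd b (lap (Wt V b)) x
        = (2 - (n : ℝ)) / (2 * ((n : ℝ) + 1)) * pd b (pd b (Phi V)) x := by
      intro b
      rw [hfun b, pd_const_mul (sm_diff (contDiff_pd (smPhi hV) b)) _ b]
    calc lap (Phi V) x = ∑ b, pd b (lap (Wt V b)) x := h1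
      _ = (2 - (n : ℝ)) / (2 * ((n : ℝ) + 1)) * ∑ b, pd b (pd b (Phi V)) x := by
          rw [Finset.sum_congr rfl fun b _ => h2 b, ← Finset.mul_sum]
      _ = _ := rfl
  have hne1 : 2 * ((n:ℝ) + 1) ≠ 0 := by positivity
  have h3 : (1 - (2 - (n : ℝ)) / (2 * ((n : ℝ) + 1))) * lap (Phi V) x = 0 := by
    linear_combination main
  have hc : (1 - (2 - (n : ℝ)) / (2 * ((n : ℝ) + 1))) ≠ 0 := by
    have hnn : (1:ℝ) ≤ (n:ℝ) := by exact_mod_cast hn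
    have : (2 - (n : ℝ)) / (2 * ((n : ℝ) + 1)) < 1 := by
      rw [div_lt_one (by positivity)]
      linarith
    linarith
  exact (mul_eq_zero.mp h3).resolve_left hc

end

section delta_sums

lemma sum3_delta12 (W : Fin n → ℝ) (T : Fin n → Fin n → Fin n → ℝ) :
    ∑ a, ∑ b, ∑ c, (if a = b then (1:ℝ) else 0) * W c * T a b c
      = ∑ a, ∑ c, W c * T a a c := by
  refine Finset.sum_congr rfl fun a _ => ?_
  rw [Finset.sum_comm]
  refine Finset.sum_congr rfl fun c _ => ?_
  simp [ite_mul]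

lemma sum3_delta23 (W : Fin n → ℝ) (T : Fin n → Fin n → Fin n → ℝ) :
    ∑ a, ∑ b, ∑ c, (if b = c then (1:ℝ) else 0) * W a * T a b c
      = ∑ a, ∑ b, W a * T a b b := by
  refine Finset.sum_congr rfl fun a _ => Finset.sum_congr rfl fun b _ => ?_
  simp [ite_mul]

lemma sum3_delta31 (W : Fin n → ℝ) (T : Fin n → Fin n → Fin n → ℝ) :
    ∑ a, ∑ b, ∑ c, (if c = a then (1:ℝ) else 0) * W b * T a b c
      = ∑ a, ∑ b, W b * T a b a := by
  refine Finset.sum_congr rfl fun a _ => Finset.sum_congr rfl fun b _ => ?_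
  simp [ite_mul, eq_comm]

end delta_sums

section
variable (hV : IsCKT2 n V)
include hV

lemma wconv' (c : Fin n) (x : Fin n → ℝ) :
    (∑ e, pd e (fun z => V z c e) x) = Wt V c x := congrFun (wconv hV c) x

omit hV

lemma T12 {f : (Fin n → ℝ) → ℝ} (hf : Sm f) (a b c : Fin n) (x : Fin n → ℝ) :
    pd a (pd b (pd c f)) x = pd b (pd a (pd c f)) x :=
  congrFun (pd_comm (contDiff_pd hf c) a b) x

lemma T23 {f : (Fin n → ℝ) → ℝ} (hf : Sm f) (a b c : Fin n) (x : Fin n → ℝ) :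
    pd a (pd b (pd c f)) x = pd a (pd c (pd b f)) x :=
  congrFun (congrArg (pd a) (pd_comm hf b c)) x

lemma Tcyc {f : (Fin n → ℝ) → ℝ} (hf : Sm f) (a b c : Fin n) (x : Fin n → ℝ) :
    pd a (pd b (pd c f)) x = pd b (pd c (pd a f)) x := by
  rw [T12 hf a b c x, T23 hf b a c x]

include hV

/-- contraction of the CKT identity against the third derivatives of `f` -/
lemma contraction {f : (Fin n → ℝ) → ℝ} (hf : Sm f) (x : Fin n → ℝ) :
    ∑ a, ∑ b, ∑ c, pd a (fun y => V y b c) x * pd a (pd b (pd c f)) x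
      = 2 / ((n : ℝ) + 2) * ∑ c, Wt V c x * pd c (lap f) x := by
  have cktp : ∀ a b c : Fin n,
      pd a (fun y => V y b c) x + pd b (fun y => V y c a) x + pd c (fun y => V y a b) x
        = 2 / ((n:ℝ) + 2) * ((if a = b then (1:ℝ) else 0) * Wt V c x
            + (if b = c then (1:ℝ) else 0) * Wt V a x
            + (if c = a then (1:ℝ) else 0) * Wt V b x) := fun a b c => by
    rw [hV.2.2.2 a b c x, wconv' hV c x, wconv' hV a x, wconv' hV b x]
  have hsum : ∑ a, ∑ b, ∑ c, ((pd a (fun y => V y b c) x + pd b (fun y => V y c a) x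
        + pd c (fun y => V y a b) x) * pd a (pd b (pd c f)) x)
      = ∑ a, ∑ b, ∑ c, ((2 / ((n:ℝ) + 2) * ((if a = b then (1:ℝ) else 0) * Wt V c x
            + (if b = c then (1:ℝ) else 0) * Wt V a x
            + (if c = a then (1:ℝ) else 0) * Wt V b x)) * pd a (pd b (pd c f)) x) :=
    Finset.sum_congr rfl fun a _ => Finset.sum_congr rfl fun b _ =>
      Finset.sum_congr rfl fun c _ => by rw [cktp a b c]
  -- the left side is three copies of the same sum
  have hS2 : ∑ a, ∑ b, ∑ c, pd b (fun y => V y c a) x * pd a (pd b (pd c f)) x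
      = ∑ a, ∑ b, ∑ c, pd a (fun y => V y b c) x * pd a (pd b (pd c f)) x := by
    calc ∑ a, ∑ b, ∑ c, pd b (fun y => V y c a) x * pd a (pd b (pd c f)) x
        = ∑ a, ∑ b, ∑ c, pd b (fun y => V y c a) x * pd b (pd c (pd a f)) x :=
          Finset.sum_congr rfl fun a _ => Finset.sum_congr rfl fun b _ =>
            Finset.sum_congr rfl fun c _ => by rw [Tcyc hf a b c x]
      _ = ∑ b, ∑ a, ∑ c, pd b (fun y => V y c a) x * pd b (pd c (pd a f)) x :=
          Finset.sum_comm
      _ = ∑ b, ∑ c, ∑ a, pd b (fun y => V y c a) x * pd b (pd c (pd a f)) x :=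
          Finset.sum_congr rfl fun b _ => Finset.sum_comm
      _ = ∑ a, ∑ b, ∑ c, pd a (fun y => V y b c) x * pd a (pd b (pd c f)) x := rfl
  have hS3 : ∑ a, ∑ b, ∑ c, pd c (fun y => V y a b) x * pd a (pd b (pd c f)) x
      = ∑ a, ∑ b, ∑ c, pd a (fun y => V y b c) x * pd a (pd b (pd c f)) x := by
    calc ∑ a, ∑ b, ∑ c, pd c (fun y => V y a b) x * pd a (pd b (pd c f)) x
        = ∑ a, ∑ b, ∑ c, pd c (fun y => V y a b) x * pd c (pd a (pd b f)) x :=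
          Finset.sum_congr rfl fun a _ => Finset.sum_congr rfl fun b _ =>
            Finset.sum_congr rfl fun c _ => by
              rw [Tcyc hf a b c x, Tcyc hf b c a x]
      _ = ∑ a, ∑ c, ∑ b, pd c (fun y => V y a b) x * pd c (pd a (pd b f)) x :=
          Finset.sum_congr rfl fun a _ => Finset.sum_comm
      _ = ∑ c, ∑ a, ∑ b, pd c (fun y => V y a b) x * pd c (pd a (pd b f)) x :=
          Finset.sum_comm
      _ = ∑ a, ∑ b, ∑ c, pd a (fun y => V y b c) x * pd a (pd b (pd c f)) x := rfl
  have hA : ∑ a, ∑ b, ∑ c, ((pd a (fun y => V y b c) x + pd b (fun y => V y c a) x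
        + pd c (fun y => V y a b) x) * pd a (pd b (pd c f)) x)
      = 3 * ∑ a, ∑ b, ∑ c, pd a (fun y => V y b c) x * pd a (pd b (pd c f)) x := by
    simp only [add_mul, Finset.sum_add_distrib]
    rw [hS2, hS3]
    ring
  -- the right side
  have hR1 : ∑ a, ∑ c : Fin n, Wt V c x * pd a (pd a (pd c f)) x
      = ∑ c, Wt V c x * pd c (lap f) x := by
    rw [Finset.sum_comm]
    refine Finset.sum_congr rfl fun c _ => ?_
    rw [← Finset.mul_sum]
    congr 1
    exact (congrFun (pd_lap hf c) x).symm
  have hR2 : ∑ a, ∑ b : Fin n, Wt V a x * pd a (pd b (pd b f)) x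
      = ∑ c, Wt V c x * pd c (lap f) x := by
    refine Finset.sum_congr rfl fun a _ => ?_
    rw [← Finset.mul_sum]
    congr 1
    exact (congrFun (pd_sum Finset.univ
      (fun b _ => sm_diff (contDiff_pd (contDiff_pd hf b) b)) a) x).symm
  have hR3 : ∑ a, ∑ b : Fin n, Wt V b x * pd a (pd b (pd a f)) x
      = ∑ c, Wt V c x * pd c (lap f) x := by
    rw [Finset.sum_comm]
    refine Finset.sum_congr rfl fun b _ => ?_
    have h2 : ∀ a : Fin n, Wt V b x * pd a (pd b (pd a f)) x
        = Wt V b x * pd b (pd a (pd a f)) x := fun a => by rw [T12 hf a b a x]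
    rw [Finset.sum_congr rfl fun a _ => h2 a, ← Finset.mul_sum]
    congr 1
    exact (congrFun (pd_sum Finset.univ
      (fun a _ => sm_diff (contDiff_pd (contDiff_pd hf a) a)) b) x).symm
  have hB : ∑ a, ∑ b, ∑ c, ((2 / ((n:ℝ) + 2) * ((if a = b then (1:ℝ) else 0) * Wt V c x
            + (if b = c then (1:ℝ) else 0) * Wt V a x
            + (if c = a then (1:ℝ) else 0) * Wt V b x)) * pd a (pd b (pd c f)) x)
      = 2 / ((n:ℝ) + 2) * (3 * ∑ c, Wt V c x * pd c (lap f) x) := by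
    have step : ∀ a b c : Fin n, ((2 / ((n:ℝ) + 2) * ((if a = b then (1:ℝ) else 0) * Wt V c x
            + (if b = c then (1:ℝ) else 0) * Wt V a x
            + (if c = a then (1:ℝ) else 0) * Wt V b x)) * pd a (pd b (pd c f)) x)
        = 2 / ((n:ℝ) + 2) * ((if a = b then (1:ℝ) else 0) * Wt V c x * pd a (pd b (pd c f)) x
            + (if b = c then (1:ℝ) else 0) * Wt V a x * pd a (pd b (pd c f)) x
            + (if c = a then (1:ℝ) else 0) * Wt V b x * pd a (pd b (pd c f)) x) :=
      fun a b c => by ring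
    rw [Finset.sum_congr rfl fun a _ => Finset.sum_congr rfl fun b _ =>
      Finset.sum_congr rfl fun c _ => step a b c]
    have pull : ∑ a, ∑ b, ∑ c, (2 / ((n:ℝ) + 2) *
          ((if a = b then (1:ℝ) else 0) * Wt V c x * pd a (pd b (pd c f)) x
            + (if b = c then (1:ℝ) else 0) * Wt V a x * pd a (pd b (pd c f)) x
            + (if c = a then (1:ℝ) else 0) * Wt V b x * pd a (pd b (pd c f)) x))
        = 2 / ((n:ℝ) + 2) * ∑ a, ∑ b, ∑ c,
          ((if a = b then (1:ℝ) else 0) * Wt V c x * pd a (pd b (pd c f)) x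
            + (if b = c then (1:ℝ) else 0) * Wt V a x * pd a (pd b (pd c f)) x
            + (if c = a then (1:ℝ) else 0) * Wt V b x * pd a (pd b (pd c f)) x) := by
      rw [Finset.mul_sum]
      refine Finset.sum_congr rfl fun a _ => ?_
      rw [Finset.mul_sum]
      refine Finset.sum_congr rfl fun b _ => ?_
      rw [Finset.mul_sum]
    rw [pull]
    have inner : ∑ a, ∑ b, ∑ c : Fin n,
          ((if a = b then (1:ℝ) else 0) * Wt V c x * pd a (pd b (pd c f)) x
            + (if b = c then (1:ℝ) else 0) * Wt V a x * pd a (pd b (pd c f)) x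
            + (if c = a then (1:ℝ) else 0) * Wt V b x * pd a (pd b (pd c f)) x)
        = 3 * ∑ c, Wt V c x * pd c (lap f) x := by
      simp only [Finset.sum_add_distrib]
      rw [sum3_delta12 (fun c => Wt V c x) (fun a b c => pd a (pd b (pd c f)) x),
        sum3_delta23 (fun c => Wt V c x) (fun a b c => pd a (pd b (pd c f)) x),
        sum3_delta31 (fun c => Wt V c x) (fun a b c => pd a (pd b (pd c f)) x),
        hR1, hR2, hR3]
      ring
    rw [inner]
  rw [hA, hB] at hsum
  linear_combination (1/3 : ℝ) * hsum

end

end CKTtool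

open CKTtool

/-- For a conformal Killing 2-tensor `V` on ℝⁿ (n ≥ 3), `Δ(D_V f) = δ_V(Δ f)`
for every smooth `f`. -/
theorem stmt_1 (n : ℕ) (hn : 3 ≤ n) (V : (Fin n → ℝ) → Fin n → Fin n → ℝ)
    (hV : IsCKT2 n V) (f : (Fin n → ℝ) → ℝ) (hf : ContDiff ℝ (⊤ : ℕ∞) f) :
    lap (opD2 V f) = opDelta2 V (lap f) := by
  have hf' : Sm f := hf.of_le (by simp)
  have hn2 : ((n:ℝ) + 2) ≠ 0 := by positivity
  have hn1 : ((n:ℝ) + 1) ≠ 0 := by positivity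
  have hn0 : 0 < n := by omega
  -- the three pieces of D_V f
  set A : (Fin n → ℝ) → ℝ := fun y => ∑ a, ∑ b, V y a b * pd a (pd b f) y with hA_def
  set B : (Fin n → ℝ) → ℝ := fun y => ∑ b, Wt V b y * pd b f y with hB_def
  set C : (Fin n → ℝ) → ℝ := fun y => Phi V y * f y with hC_def
  have smHab : ∀ a b : Fin n, Sm (pd a (pd b f)) :=
    fun a b => contDiff_pd (contDiff_pd hf' b) a
  have smA : Sm A := sm_sum _ fun a _ => sm_sum _ fun b _ => sm_mul (smV hV a b) (smHab a b)
  have smB : Sm B := sm_sum _ fun b _ => sm_mul (smW hV b) (contDiff_pd hf' b)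
  have smC : Sm C := sm_mul (smPhi hV) hf'
  have hD : opD2 V f = fun y => A y + ((n : ℝ) / ((n : ℝ) + 2) * B y
      + (n : ℝ) * ((n : ℝ) - 2) / (4 * ((n : ℝ) + 2) * ((n : ℝ) + 1)) * C y) := by
    funext y
    show (∑ a, ∑ b, V y a b * pd a (pd b f) y)
        + (n : ℝ) / ((n : ℝ) + 2) * ∑ b, Wt V b y * pd b f y
        + (n : ℝ) * ((n : ℝ) - 2) / (4 * ((n : ℝ) + 2) * ((n : ℝ) + 1)) * Phi V y * f y
      = A y + ((n : ℝ) / ((n : ℝ) + 2) * B y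
        + (n : ℝ) * ((n : ℝ) - 2) / (4 * ((n : ℝ) + 2) * ((n : ℝ) + 1)) * C y)
    rw [hA_def, hB_def, hC_def]
    ring
  funext x
  -- named quantities
  set P1 : ℝ := ∑ a, ∑ b, V x a b * pd a (pd b (lap f)) x with hP1
  set P2 : ℝ := ∑ c, Wt V c x * pd c (lap f) x with hP2
  set P3 : ℝ := Phi V x * lap f x with hP3
  set Q : ℝ := ∑ a, ∑ b, pd a (Wt V b) x * pd a (pd b f) x with hQ
  set R : ℝ := ∑ b, pd b (Phi V) x * pd b f x with hR
  -- second/fourth derivative commutation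
  have h4 : ∀ a b : Fin n, lap (pd a (pd b f)) x = pd a (pd b (lap f)) x := by
    intro a b
    calc lap (pd a (pd b f)) x = pd a (lap (pd b f)) x :=
          (congrFun (pd_lap (contDiff_pd hf' b) a) x).symm
      _ = pd a (pd b (lap f)) x := by rw [pd_lap hf' b]
  -- Laplacian of A
  have HA : lap A x = -(2*(n:ℝ)/((n:ℝ)+2)) * Q + 2/((n:ℝ)+2) * P3
      + 4/((n:ℝ)+2) * P2 + P1 := by
    have e1 : lap A x = ∑ a, ∑ b, (lap (fun y => V y a b) x * pd a (pd b f) x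
        + 2 * (∑ e, pd e (fun y => V y a b) x * pd e (pd a (pd b f)) x)
        + V x a b * lap (pd a (pd b f)) x) := by
      rw [hA_def]
      rw [lap_sum Finset.univ
        (fun a _ => sm_sum Finset.univ fun b _ => sm_mul (smV hV a b) (smHab a b)) x]
      refine Finset.sum_congr rfl fun a _ => ?_
      rw [lap_sum Finset.univ (fun b _ => sm_mul (smV hV a b) (smHab a b)) x]
      exact Finset.sum_congr rfl fun b _ => lap_mul (smV hV a b) (smHab a b) x
    rw [e1]
    simp only [Finset.sum_add_distrib]
    -- term 3 : P1
    have e3 : ∑ a, ∑ b, V x a b * lap (pd a (pd b f)) x = P1 := by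
      rw [hP1]
      exact Finset.sum_congr rfl fun a _ => Finset.sum_congr rfl fun b _ => by rw [h4 a b]
    -- term 2 : third-derivative contraction
    have e2 : ∑ a, ∑ b, 2 * (∑ e, pd e (fun y => V y a b) x * pd e (pd a (pd b f)) x)
        = 4/((n:ℝ)+2) * P2 := by
      have swap : ∑ a, ∑ b, (∑ e, pd e (fun y => V y a b) x * pd e (pd a (pd b f)) x)
          = ∑ a, ∑ b, ∑ c, pd a (fun y => V y b c) x * pd a (pd b (pd c f)) x := by
        calc ∑ a, ∑ b, ∑ e, pd e (fun y => V y a b) x * pd e (pd a (pd b f)) x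
            = ∑ a, ∑ e, ∑ b, pd e (fun y => V y a b) x * pd e (pd a (pd b f)) x :=
              Finset.sum_congr rfl fun a _ => Finset.sum_comm
          _ = ∑ e, ∑ a, ∑ b, pd e (fun y => V y a b) x * pd e (pd a (pd b f)) x :=
              Finset.sum_comm
      have pull : ∑ a, ∑ b, 2 * (∑ e, pd e (fun y => V y a b) x * pd e (pd a (pd b f)) x)
          = 2 * ∑ a, ∑ b, (∑ e, pd e (fun y => V y a b) x * pd e (pd a (pd b f)) x) := by
        rw [Finset.mul_sum]
        refine Finset.sum_congr rfl fun a _ => ?_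
        rw [Finset.mul_sum]
      rw [pull, swap, contraction hV hf' x, hP2]
      ring
    -- term 1
    have e0 : ∑ a, ∑ b, lap (fun y => V y a b) x * pd a (pd b f) x
        = -(2*(n:ℝ)/((n:ℝ)+2)) * Q + 2/((n:ℝ)+2) * P3 := by
      have step : ∀ a b : Fin n, lap (fun y => V y a b) x * pd a (pd b f) x
          = -((n:ℝ)/((n:ℝ)+2)) * (pd a (Wt V b) x * pd a (pd b f) x)
            + -((n:ℝ)/((n:ℝ)+2)) * (pd b (Wt V a) x * pd a (pd b f) x)
            + 2/((n:ℝ)+2) * Phi V x * (if a = b then pd a (pd b f) x else 0) := by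
        intro a b
        rw [lapV hV a b x]
        rcases eq_or_ne a b with h | h <;> simp [h] <;> ring
      rw [Finset.sum_congr rfl fun a _ => Finset.sum_congr rfl fun b _ => step a b]
      simp only [Finset.sum_add_distrib]
      have q1 : ∑ a, ∑ b : Fin n,
          -((n:ℝ)/((n:ℝ)+2)) * (pd a (Wt V b) x * pd a (pd b f) x)
          = -((n:ℝ)/((n:ℝ)+2)) * Q := by
        rw [hQ, Finset.mul_sum]
        refine Finset.sum_congr rfl fun a _ => ?_
        rw [Finset.mul_sum]
      have q2 : ∑ a, ∑ b : Fin n,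
          -((n:ℝ)/((n:ℝ)+2)) * (pd b (Wt V a) x * pd a (pd b f) x)
          = -((n:ℝ)/((n:ℝ)+2)) * Q := by
        have qsym : ∑ a, ∑ b : Fin n, pd b (Wt V a) x * pd a (pd b f) x = Q := by
          calc ∑ a, ∑ b : Fin n, pd b (Wt V a) x * pd a (pd b f) x
              = ∑ a, ∑ b : Fin n, pd b (Wt V a) x * pd b (pd a f) x :=
                Finset.sum_congr rfl fun a _ => Finset.sum_congr rfl fun b _ => by
                  rw [congrFun (pd_comm hf' a b) x]
            _ = ∑ b, ∑ a : Fin n, pd b (Wt V a) x * pd b (pd a f) x := Finset.sum_comm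
            _ = Q := rfl
        calc ∑ a, ∑ b : Fin n, -((n:ℝ)/((n:ℝ)+2)) * (pd b (Wt V a) x * pd a (pd b f) x)
            = -((n:ℝ)/((n:ℝ)+2)) * ∑ a, ∑ b : Fin n,
                pd b (Wt V a) x * pd a (pd b f) x := by
              rw [Finset.mul_sum]
              refine Finset.sum_congr rfl fun a _ => ?_
              rw [Finset.mul_sum]
          _ = _ := by rw [qsym]
      have q3 : ∑ a, ∑ b : Fin n,
          2/((n:ℝ)+2) * Phi V x * (if a = b then pd a (pd b f) x else 0)
          = 2/((n:ℝ)+2) * P3 := by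
        have inner : ∀ a : Fin n, ∑ b : Fin n,
            2/((n:ℝ)+2) * Phi V x * (if a = b then pd a (pd b f) x else 0)
            = 2/((n:ℝ)+2) * Phi V x * pd a (pd a f) x := by
          intro a
          rw [← Finset.mul_sum]
          congr 1
          simp [Finset.sum_ite_eq]
        rw [Finset.sum_congr rfl fun a _ => inner a, hP3, ← Finset.mul_sum]
        have : (∑ a, pd a (pd a f) x) = lap f x := rfl
        rw [this]
        ring
      rw [q1, q2, q3]
      ring
    rw [e0, e2, e3]
  -- Laplacian of B
  have HB : lap B x = (2-(n:ℝ))/(2*((n:ℝ)+1)) * R + 2 * Q + P2 := by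
    have e1 : lap B x = ∑ b, (lap (Wt V b) x * pd b f x
        + 2 * (∑ e, pd e (Wt V b) x * pd e (pd b f) x)
        + Wt V b x * lap (pd b f) x) := by
      rw [hB_def, lap_sum Finset.univ
        (fun b _ => sm_mul (smW hV b) (contDiff_pd hf' b)) x]
      exact Finset.sum_congr rfl fun b _ => lap_mul (smW hV b) (contDiff_pd hf' b) x
    rw [e1]
    simp only [Finset.sum_add_distrib]
    have t1 : ∑ b, lap (Wt V b) x * pd b f x = (2-(n:ℝ))/(2*((n:ℝ)+1)) * R := by
      rw [hR, Finset.mul_sum]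
      refine Finset.sum_congr rfl fun b _ => ?_
      rw [lapW hV b x]
      ring
    have t2 : ∑ b, 2 * (∑ e, pd e (Wt V b) x * pd e (pd b f) x) = 2 * Q := by
      have pull : ∑ b, 2 * (∑ e, pd e (Wt V b) x * pd e (pd b f) x)
          = 2 * ∑ b, ∑ e, pd e (Wt V b) x * pd e (pd b f) x := by
        rw [Finset.mul_sum]
      rw [pull, hQ]
      exact congrArg (fun z => 2 * z) Finset.sum_comm
    have t3 : ∑ b, Wt V b x * lap (pd b f) x = P2 := by
      rw [hP2]
      refine Finset.sum_congr rfl fun b _ => ?_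
      rw [(congrFun (pd_lap hf' b) x).symm]
    rw [t1, t2, t3]
  -- Laplacian of C
  have HC : lap C x = 2 * R + P3 := by
    rw [hC_def, lap_mul (smPhi hV) hf' x, lapPhi hV hn0 x, hR, hP3]
    ring
  -- assembling the left-hand side
  have smBB : Sm (fun y => (n : ℝ) / ((n : ℝ) + 2) * B y) := sm_mul contDiff_const smB
  have smCC : Sm (fun y => (n : ℝ) * ((n : ℝ) - 2) / (4 * ((n : ℝ) + 2) * ((n : ℝ) + 1)) * C y) :=
    sm_mul contDiff_const smC
  have HL : lap (opD2 V f) x = lap A x + ((n : ℝ) / ((n : ℝ) + 2) * lap B x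
      + (n : ℝ) * ((n : ℝ) - 2) / (4 * ((n : ℝ) + 2) * ((n : ℝ) + 1)) * lap C x) := by
    rw [hD, lap_add smA (smBB.add smCC) x, lap_add smBB smCC x,
      lap_const_mul smB _ x, lap_const_mul smC _ x]
  -- the right-hand side
  have HR : opDelta2 V (lap f) x = P1 + ((n:ℝ)+4)/((n:ℝ)+2) * P2
      + ((n:ℝ)+4)/(4*((n:ℝ)+1)) * P3 := by
    show (∑ a, ∑ b, V x a b * pd a (pd b (lap f)) x)
        + ((n:ℝ)+4)/((n:ℝ)+2) * ∑ b, Wt V b x * pd b (lap f) x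
        + ((n:ℝ)+4)/(4*((n:ℝ)+1)) * Phi V x * lap f x = _
    rw [hP1, hP2, hP3]
    ring
  calc lap (opD2 V f) x
      = lap A x + ((n : ℝ) / ((n : ℝ) + 2) * lap B x
        + (n : ℝ) * ((n : ℝ) - 2) / (4 * ((n : ℝ) + 2) * ((n : ℝ) + 1)) * lap C x) := HL
    _ = P1 + ((n:ℝ)+4)/((n:ℝ)+2) * P2 + ((n:ℝ)+4)/(4*((n:ℝ)+1)) * P3 := by
        rw [HA, HB, HC]
        field_simp
        ring
    _ = opDelta2 V (lap f) x := HR.symm
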